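/- arXiv:2309.08137 — 3 statements merged into one kernel-verified Lean document; each statement's English description precedes it below -/
import Mathlib

section
/- Let γ : [0,1] → ℝ² be a continuous curve of finite length such that γ(1) = γ(0) + (2,0). Suppose there exist s₀, s₁ ∈ [0,1] with γ₂(s₀) = 2 and |γ₂(s₁) − 2| ≥ 1/2 (where γ₂ denotes the second component of γ). Then the length of γ is at least √5. -/
/-!
Cut `[0, 1]` at `s₀` and `s₁`: the three chords of `γ` bound its length from below. Reflecting
the middle chord in the horizontal axis keeps its length, so by the triangle inequality the length
is at least the norm of `(2, -2δ)`, where `δ` is the height change along the middle chord; since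
`|δ| ≥ 1/2`, this is at least `√(4 + 1) = √5`.
-/

open Set

theorem EuclideanSpace.norm_fin_two (v : EuclideanSpace ℝ (Fin 2)) :
    ‖v‖ = √(v 0 ^ 2 + v 1 ^ 2) := by
  simp [EuclideanSpace.norm_eq, Fin.sum_univ_two]

theorem sqrt_le_norm_add_norm_add_norm (u v w : EuclideanSpace ℝ (Fin 2)) :
    √((u + v + w) 0 ^ 2 + ((u + v + w) 1 - 2 * v 1) ^ 2) ≤ ‖u‖ + ‖v‖ + ‖w‖ := by
  -- `v'` is `v` reflected in the horizontal axis
  set v' : EuclideanSpace ℝ (Fin 2) := !₂[v 0, -v 1]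
  have hv' : ‖v'‖ = ‖v‖ := by simp [EuclideanSpace.norm_fin_two, v']
  calc √((u + v + w) 0 ^ 2 + ((u + v + w) 1 - 2 * v 1) ^ 2) = ‖u + v' + w‖ := by
        simp [EuclideanSpace.norm_fin_two, v']
        ring_nf
    _ ≤ ‖u‖ + ‖v'‖ + ‖w‖ := norm_add₃_le
    _ = ‖u‖ + ‖v‖ + ‖w‖ := by rw [hv']

theorem eVariationOn.edist_add_edist_add_edist_le {α E : Type*} [LinearOrder α]
    [PseudoEMetricSpace E] (f : α → E) {a b c d : α} (hab : a ≤ b) (hbc : b ≤ c) (hcd : c ≤ d) :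
    edist (f a) (f b) + edist (f b) (f c) + edist (f c) (f d) ≤ eVariationOn f (Icc a d) := by
  have split := fun {x y z : α} (hxy : x ≤ y) (hyz : y ≤ z) => by
    simpa using eVariationOn.Icc_add_Icc f (s := univ) hxy hyz (mem_univ y)
  rw [← split (hab.trans hbc) hcd, ← split hab hbc]
  gcongr <;> exact eVariationOn.edist_le f ⟨le_rfl, ‹_›⟩ ⟨‹_›, le_rfl⟩

theorem ofReal_sqrt_le_eVariationOn (γ : ℝ → EuclideanSpace ℝ (Fin 2)) {a b c d : ℝ}
    (hab : a ≤ b) (hbc : b ≤ c) (hcd : c ≤ d) :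
    ENNReal.ofReal √((γ d 0 - γ a 0) ^ 2 + (γ d 1 - γ a 1 - 2 * (γ c 1 - γ b 1)) ^ 2)
      ≤ eVariationOn γ (Icc a d) := by
  refine le_trans ?_ (eVariationOn.edist_add_edist_add_edist_le γ hab hbc hcd)
  simp only [edist_dist, dist_eq_norm']
  rw [← ENNReal.ofReal_add (by positivity) (by positivity),
    ← ENNReal.ofReal_add (by positivity) (by positivity)]
  refine ENNReal.ofReal_le_ofReal (le_of_eq_of_le ?_ (sqrt_le_norm_add_norm_add_norm _ _ _))
  simp

theorem stmt0_general (γ : ℝ → EuclideanSpace ℝ (Fin 2))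
    (hper1 : γ (1:ℝ) (0 : Fin 2) = γ (0:ℝ) (0 : Fin 2) + 2)
    (hper2 : γ (1:ℝ) (1 : Fin 2) = γ (0:ℝ) (1 : Fin 2))
    (s₀ s₁ : ℝ) (hs₀ : s₀ ∈ Set.Icc (0:ℝ) 1) (hs₁ : s₁ ∈ Set.Icc (0:ℝ) 1)
    (h₀ : γ s₀ (1 : Fin 2) = 2) (h₁ : |γ s₁ (1 : Fin 2) - 2| ≥ 1/2) :
    ENNReal.ofReal (Real.sqrt 5) ≤ eVariationOn γ (Set.Icc (0:ℝ) 1) := by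
  have of_ordered {a b : ℝ} (ha : 0 ≤ a) (hab : a ≤ b) (hb : b ≤ 1)
      (hδ : 1 / 4 ≤ (γ b 1 - γ a 1) ^ 2) :
      ENNReal.ofReal √5 ≤ eVariationOn γ (Icc 0 1) := by
    refine le_trans ?_ (ofReal_sqrt_le_eVariationOn γ ha hab hb)
    gcongr
    rw [hper1, hper2]
    nlinarith
  have hδ : 1 / 4 ≤ (γ s₁ 1 - γ s₀ 1) ^ 2 := by
    rw [h₀, ← sq_abs]
    nlinarith
  rcases le_total s₀ s₁ with h | h
  · exact of_ordered hs₀.1 h hs₁.2 hδ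
  · exact of_ordered hs₁.1 h hs₀.2 (by rwa [← neg_sub, neg_sq])

/-- A continuous curve of finite length in ℝ² (Euclidean norm) whose endpoint is the
starting point shifted by (2,0), which meets the line {x₂ = 2} and also reaches
a point at vertical distance ≥ 1/2 from that line, has length (total variation on
[0,1]) at least √5. -/
theorem stmt0 (γ : ℝ → EuclideanSpace ℝ (Fin 2))
    (hcont : ContinuousOn γ (Set.Icc (0:ℝ) 1))
    (hfin : eVariationOn γ (Set.Icc (0:ℝ) 1) ≠ ⊤)
    (hper1 : γ (1:ℝ) (0 : Fin 2) = γ (0:ℝ) (0 : Fin 2) + 2)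
    (hper2 : γ (1:ℝ) (1 : Fin 2) = γ (0:ℝ) (1 : Fin 2))
    (s₀ s₁ : ℝ) (hs₀ : s₀ ∈ Set.Icc (0:ℝ) 1) (hs₁ : s₁ ∈ Set.Icc (0:ℝ) 1)
    (h₀ : γ s₀ (1 : Fin 2) = 2) (h₁ : |γ s₁ (1 : Fin 2) - 2| ≥ 1/2) :
    ENNReal.ofReal (Real.sqrt 5) ≤ eVariationOn γ (Set.Icc (0:ℝ) 1) :=
  stmt0_general γ hper1 hper2 s₀ s₁ hs₀ hs₁ h₀ h₁
end

section
/- Let γ : [0,1] → ℝ² be a continuous curve of finite length such that γ(1) = γ(0) + (2,0), whose length is at most 2.05, and suppose there exists s₀ ∈ [0,1] with γ₂(s₀) = 2 (where γ₂ denotes the second component of γ). Then for every s ∈ [0,1] one has 3/2 < γ₂(s) < 5/2. -/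
/-! If the curve meets the line `x₂ = 2` at time `s₀` and leaves the strip at time `s`, then the
chords through `γ 0`, `γ s`, `γ s₀`, `γ 1` (in time order) bound the length from below. Their
horizontal displacements add up to `2` and the middle chord rises by at least `1/2`, so by
Minkowski's inequality they have total length at least `√(4 + 1/4) > 2.05`. -/

open Set

theorem sqrt_sq_add_sq_le_dist_add_dist_add_dist (x y z w : EuclideanSpace ℝ (Fin 2)) :
    √((w 0 - x 0) ^ 2 + (z 1 - y 1) ^ 2) ≤ dist x y + dist y z + dist z w := by
  have hxy : |y 0 - x 0| ≤ dist x y := by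
    simpa [Real.dist_eq, abs_sub_comm] using PiLp.dist_apply_le x y 0
  have hyz : |z 0 - y 0| ≤ dist y z := by
    simpa [Real.dist_eq, abs_sub_comm] using PiLp.dist_apply_le y z 0
  have hzw : |w 0 - z 0| ≤ dist z w := by
    simpa [Real.dist_eq, abs_sub_comm] using PiLp.dist_apply_le z w 0
  have hyz_sq : dist y z ^ 2 = (z 0 - y 0) ^ 2 + (z 1 - y 1) ^ 2 := by
    rw [EuclideanSpace.dist_eq, Real.sq_sqrt (by positivity), Fin.sum_univ_two,
      Real.dist_eq, Real.dist_eq, sq_abs, sq_abs]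
    ring
  have horiz : |w 0 - x 0| ≤ dist x y + dist z w + |z 0 - y 0| := by
    rw [show w 0 - x 0 = (y 0 - x 0) + (z 0 - y 0) + (w 0 - z 0) by ring]
    linarith [abs_add_three (y 0 - x 0) (z 0 - y 0) (w 0 - z 0)]
  rw [Real.sqrt_le_iff]
  refine ⟨by positivity, ?_⟩
  have hm : 0 ≤ dist x y + dist z w := by positivity
  nlinarith [mul_le_mul horiz horiz (abs_nonneg _) (by positivity),
    mul_le_mul_of_nonneg_left hyz hm, sq_abs (w 0 - x 0), sq_abs (z 0 - y 0)]

section Variation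

variable {α E : Type*} [LinearOrder α] [PseudoEMetricSpace E]

theorem edist_add_edist_le_eVariationOn_inter_Icc (f : α → E) {s : Set α} {x y z : α}
    (hxy : x ≤ y) (hyz : y ≤ z) (hx : x ∈ s) (hy : y ∈ s) (hz : z ∈ s) :
    edist (f x) (f y) + edist (f y) (f z) ≤ eVariationOn f (s ∩ Icc x z) := by
  rw [← eVariationOn.Icc_add_Icc f hxy hyz hy]
  gcongr
  · exact eVariationOn.edist_le f ⟨hx, le_rfl, hxy⟩ ⟨hy, hxy, le_rfl⟩
  · exact eVariationOn.edist_le f ⟨hy, le_rfl, hyz⟩ ⟨hz, hyz, le_rfl⟩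

theorem edist_add_edist_add_edist_le_eVariationOn (f : α → E) {s : Set α} {x y z w : α}
    (hxy : x ≤ y) (hyz : y ≤ z) (hzw : z ≤ w) (hx : x ∈ s) (hy : y ∈ s) (hz : z ∈ s)
    (hw : w ∈ s) :
    edist (f x) (f y) + edist (f y) (f z) + edist (f z) (f w) ≤ eVariationOn f s :=
  calc edist (f x) (f y) + edist (f y) (f z) + edist (f z) (f w)
      ≤ eVariationOn f (s ∩ Icc x z) + eVariationOn f (s ∩ Icc z w) :=
        add_le_add (edist_add_edist_le_eVariationOn_inter_Icc f hxy hyz hx hy hz)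
          (eVariationOn.edist_le f ⟨hz, le_rfl, hzw⟩ ⟨hw, hzw, le_rfl⟩)
    _ = eVariationOn f (s ∩ Icc x w) := eVariationOn.Icc_add_Icc f (hxy.trans hyz) hzw hz
    _ ≤ eVariationOn f s := eVariationOn.mono f inter_subset_left

theorem ofReal_sqrt_le_eVariationOn_s2 (f : α → EuclideanSpace ℝ (Fin 2)) {s : Set α}
    {x y z w : α} (hxy : x ≤ y) (hyz : y ≤ z) (hzw : z ≤ w) (hx : x ∈ s)
    (hy : y ∈ s) (hz : z ∈ s) (hw : w ∈ s) :
    ENNReal.ofReal √((f w 0 - f x 0) ^ 2 + (f z 1 - f y 1) ^ 2) ≤ eVariationOn f s :=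
  calc ENNReal.ofReal √((f w 0 - f x 0) ^ 2 + (f z 1 - f y 1) ^ 2)
      ≤ ENNReal.ofReal (dist (f x) (f y) + dist (f y) (f z) + dist (f z) (f w)) :=
        ENNReal.ofReal_le_ofReal (sqrt_sq_add_sq_le_dist_add_dist_add_dist _ _ _ _)
    _ = edist (f x) (f y) + edist (f y) (f z) + edist (f z) (f w) := by
        simp only [edist_dist, ENNReal.ofReal_add, add_nonneg, dist_nonneg]
    _ ≤ eVariationOn f s :=
        edist_add_edist_add_edist_le_eVariationOn f hxy hyz hzw hx hy hz hw

end Variation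

theorem stmt2_general (γ : ℝ → EuclideanSpace ℝ (Fin 2))
    (hlen : eVariationOn γ (Set.Icc (0:ℝ) 1) ≤ ENNReal.ofReal 2.05)
    (hper1 : γ (1:ℝ) (0 : Fin 2) = γ (0:ℝ) (0 : Fin 2) + 2)
    (s₀ : ℝ) (hs₀ : s₀ ∈ Set.Icc (0:ℝ) 1)
    (h₀ : γ s₀ (1 : Fin 2) = 2) :
    ∀ s ∈ Set.Icc (0:ℝ) 1, 3/2 < γ s (1 : Fin 2) ∧ γ s (1 : Fin 2) < 5/2 := by
  intro s hs
  by_contra hout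
  have hgap : 1 / 4 ≤ (γ s 1 - γ s₀ 1) ^ 2 := by
    rw [not_and_or, not_lt, not_lt] at hout
    rcases hout with h | h <;> nlinarith
  have hchord : ∀ t ∈ Icc (0:ℝ) 1, ∀ u ∈ Icc (0:ℝ) 1, t ≤ u →
      ENNReal.ofReal √(2 ^ 2 + (γ u 1 - γ t 1) ^ 2) ≤ ENNReal.ofReal 2.05 := fun t ht u hu htu =>
    calc _ = ENNReal.ofReal √((γ 1 0 - γ 0 0) ^ 2 + (γ u 1 - γ t 1) ^ 2) := by
          rw [hper1, add_sub_cancel_left]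
      _ ≤ eVariationOn γ (Icc 0 1) :=
          ofReal_sqrt_le_eVariationOn_s2 γ ht.1 htu hu.2 (left_mem_Icc.2 zero_le_one) ht hu
            (right_mem_Icc.2 zero_le_one)
      _ ≤ _ := hlen
  have hfar : ∀ d : ℝ, 1 / 4 ≤ d → ¬ ENNReal.ofReal √(2 ^ 2 + d) ≤ ENNReal.ofReal 2.05 := by
    intro d hd
    rw [ENNReal.ofReal_le_ofReal_iff (by norm_num), Real.sqrt_le_left (by norm_num), not_le]
    linarith
  rcases le_total s s₀ with h | h
  · exact hfar _ (by rwa [← neg_sub, neg_sq]) (hchord s hs s₀ hs₀ h)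
  · exact hfar _ hgap (hchord s₀ hs₀ s hs h)

/-- A continuous curve in ℝ² (Euclidean norm) whose endpoint is the starting point
shifted by (2,0), whose length (total variation on [0,1]) is at most 2.05, and which
meets the line {x₂ = 2}, stays confined in the strip 3/2 < x₂ < 5/2. -/
theorem stmt2 (γ : ℝ → EuclideanSpace ℝ (Fin 2))
    (hcont : ContinuousOn γ (Set.Icc (0:ℝ) 1))
    (hlen : eVariationOn γ (Set.Icc (0:ℝ) 1) ≤ ENNReal.ofReal 2.05)
    (hper1 : γ (1:ℝ) (0 : Fin 2) = γ (0:ℝ) (0 : Fin 2) + 2)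
    (hper2 : γ (1:ℝ) (1 : Fin 2) = γ (0:ℝ) (1 : Fin 2))
    (s₀ : ℝ) (hs₀ : s₀ ∈ Set.Icc (0:ℝ) 1)
    (h₀ : γ s₀ (1 : Fin 2) = 2) :
    ∀ s ∈ Set.Icc (0:ℝ) 1, 3/2 < γ s (1 : Fin 2) ∧ γ s (1 : Fin 2) < 5/2 :=
  stmt2_general γ hlen hper1 s₀ hs₀ h₀
end

section
/- For every a ∈ (0, 1/2], the Lebesgue integral of the function y ↦ y₁·y₂/(y₁² + y₂²)² over the rectangle [2a, 1] × [0, 2a] is at most 1/4. -/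
/-!
The kernel is dominated by y₂/y₁³ on the quadrant y₁ > 0, y₂ ≥ 0, and the integral of
y₂/y₁³ over [b,1] × [0,b] factors as (∫_b^1 x⁻³ dx)(∫_0^b y dy) = (1 - b²)/4 ≤ 1/4.
-/

open MeasureTheory Set

lemma mul_div_sq_add_sq_sq_le_div_pow_three {x y : ℝ} (hx : 0 < x) (hy : 0 ≤ y) :
    x * y / (x ^ 2 + y ^ 2) ^ 2 ≤ y / x ^ 3 := calc
  x * y / (x ^ 2 + y ^ 2) ^ 2 ≤ x * y / (x ^ 2) ^ 2 := by gcongr; nlinarith [sq_nonneg y]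
  _ = y / x ^ 3 := by field_simp

lemma integral_Icc_inv_pow_three {a b : ℝ} (ha : 0 < a) (hab : a ≤ b) :
    ∫ x in Icc a b, (x ^ 3)⁻¹ = ((a ^ 2)⁻¹ - (b ^ 2)⁻¹) / 2 := by
  have h0 : (0 : ℝ) ∉ uIcc a b := by
    rw [uIcc_of_le hab, mem_Icc]; intro h; linarith [h.1]
  rw [integral_Icc_eq_integral_Ioc, ← intervalIntegral.integral_of_le hab]
  have := integral_zpow (a := a) (b := b) (n := -3) (Or.inr ⟨by norm_num, h0⟩)
  simp only [zpow_neg] at this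
  norm_num at this
  rw [this]; ring

lemma integral_Icc_id {a b : ℝ} (hab : a ≤ b) : ∫ x in Icc a b, x = (b ^ 2 - a ^ 2) / 2 := by
  rw [integral_Icc_eq_integral_Ioc, ← intervalIntegral.integral_of_le hab, integral_id]

lemma setIntegral_Icc_prod_Icc_mul_div_sq_add_sq_sq_le {b : ℝ} (hb : 0 < b) (hb1 : b ≤ 1) :
    ∫ y in Icc b 1 ×ˢ Icc (0 : ℝ) b, y.1 * y.2 / (y.1 ^ 2 + y.2 ^ 2) ^ 2 ≤ (1 - b ^ 2) / 4 := by
  set s := Icc b 1 ×ˢ Icc (0 : ℝ) b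
  have hs : IsCompact s := isCompact_Icc.prod isCompact_Icc
  have hfst : ∀ y ∈ s, 0 < y.1 := fun y hy => hb.trans_le hy.1.1
  have hkernel : ContinuousOn (fun y : ℝ × ℝ => y.1 * y.2 / (y.1 ^ 2 + y.2 ^ 2) ^ 2) s :=
    ContinuousOn.div (by fun_prop) (by fun_prop) fun y hy => by have := hfst y hy; positivity
  have hbound : ContinuousOn (fun y : ℝ × ℝ => (y.1 ^ 3)⁻¹ * y.2) s :=
    ContinuousOn.mul (ContinuousOn.inv₀ (by fun_prop) fun y hy => (pow_pos (hfst y hy) 3).ne')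
      (by fun_prop)
  calc ∫ y in s, y.1 * y.2 / (y.1 ^ 2 + y.2 ^ 2) ^ 2
      ≤ ∫ y in s, (y.1 ^ 3)⁻¹ * y.2 := by
        refine setIntegral_mono_on (hkernel.integrableOn_compact hs)
          (hbound.integrableOn_compact hs) hs.measurableSet fun y hy => ?_
        rw [inv_mul_eq_div]
        exact mul_div_sq_add_sq_sq_le_div_pow_three (hfst y hy) hy.2.1
    _ = (∫ x in Icc b 1, (x ^ 3)⁻¹) * ∫ x in Icc (0 : ℝ) b, x := by
        rw [Measure.volume_eq_prod]
        exact setIntegral_prod_mul (fun x : ℝ => (x ^ 3)⁻¹) id _ _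
    _ = (1 - b ^ 2) / 4 := by
        rw [integral_Icc_inv_pow_three hb hb1, integral_Icc_id hb.le]
        field_simp
        ring

/-- Uniform bound on the integral of the Kiselev–Šverák kernel y₁y₂/|y|⁴ over the
rectangle [2a,1] × [0,2a]: for every a ∈ (0,1/2] it is at most 1/4. -/
theorem stmt9 (a : ℝ) (ha : 0 < a) (ha2 : a ≤ 1/2) :
    ∫ y in Set.Icc (2*a) 1 ×ˢ Set.Icc (0:ℝ) (2*a),
      y.1 * y.2 / (y.1^2 + y.2^2)^2 ≤ 1/4 := by
  calc _ ≤ (1 - (2 * a) ^ 2) / 4 :=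
        setIntegral_Icc_prod_Icc_mul_div_sq_add_sq_sq_le (by linarith) (by linarith)
    _ ≤ 1 / 4 := by nlinarith
end
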